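/- Let A be a real symmetric positive semidefinite n×n matrix and γ > 0. Then the matrix M := (1/4)·(I + sqrt(I + 4γ⁻¹ A))² is symmetric positive definite and satisfies M - sqrt(M) = γ⁻¹ A, where sqrt denotes the unique positive semidefinite square root. -/

import Mathlib

/-- The positive semidefinite square root of a positive semidefinite matrix
(the definition `Matrix.PosSemidef.sqrt` of the older Mathlib, since removed). -/
noncomputable def Matrix.PosSemidef.sqrt {n 𝕜 : Type*} [Fintype n] [DecidableEq n] [RCLike 𝕜]
    [PartialOrder 𝕜] {A : Matrix n n 𝕜} (hA : A.PosSemidef) : Matrix n n 𝕜 :=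
  hA.1.eigenvectorUnitary.1 * Matrix.diagonal ((↑) ∘ (√·) ∘ hA.1.eigenvalues) *
    (star hA.1.eigenvectorUnitary : Matrix n n 𝕜)

/-!
With `S = √(1 + 4γ⁻¹A)` and `U = (1 + S)/2`, the matrix in question is `U²`. Since `U ≥ 1/2` is
positive definite, so is `U²`, and uniqueness of positive square roots gives `√(U²) = U`. Then
`U² - U = (S² - 1)/4 = γ⁻¹A`.
-/

open scoped MatrixOrder ComplexOrder

namespace Matrix

variable {ι : Type*} [Fintype ι] [DecidableEq ι]

namespace PosSemidef

variable {A : Matrix ι ι ℝ}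

theorem sqrt_eq_cfcSqrt (hA : A.PosSemidef) : hA.sqrt = CFC.sqrt A := by
  rw [CFC.sqrt_eq_cfc, cfc_nnreal_eq_real _ A, hA.1.cfc_eq]
  simp [IsHermitian.cfc, PosSemidef.sqrt, Unitary.conjStarAlgAut_apply, Function.comp_def,
    max_eq_left (hA.eigenvalues_nonneg _)]

theorem posSemidef_sqrt (hA : A.PosSemidef) : hA.sqrt.PosSemidef := by
  rw [hA.sqrt_eq_cfcSqrt]
  exact nonneg_iff_posSemidef.mp (CFC.sqrt_nonneg A)

theorem sqrt_sq (hA : A.PosSemidef) : hA.sqrt ^ 2 = A := by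
  rw [hA.sqrt_eq_cfcSqrt]
  exact CFC.sq_sqrt A hA.nonneg

theorem sqrt_sq_eq_self (hA : A.PosSemidef) (hA2 : (A ^ 2).PosSemidef) : hA2.sqrt = A := by
  rw [hA2.sqrt_eq_cfcSqrt]
  exact CFC.sqrt_sq A hA.nonneg

end PosSemidef

theorem PosDef.sq {𝕜 : Type*} [RCLike 𝕜] {A : Matrix ι ι 𝕜} (hA : A.PosDef) : (A ^ 2).PosDef :=
  (hA.posSemidef.pow 2).posDef_iff_isUnit.mpr (hA.isUnit.pow 2)

end Matrix

theorem smul_half_one_add_sq_sub {R : Type*} [Ring R] [Algebra ℝ R] (S : R) :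
    ((1 / 2 : ℝ) • (1 + S)) ^ 2 - (1 / 2 : ℝ) • (1 + S) = (1 / 4 : ℝ) • (S ^ 2 - 1) := by
  have hsq : (1 + S) ^ 2 = 1 + S + S + S ^ 2 := by noncomm_ring
  rw [smul_pow, hsq]
  module

theorem matrix_kkt_sqrt_identity_general {n : ℕ} (A : Matrix (Fin n) (Fin n) ℝ) (γ : ℝ)
    (hB : ((1 : Matrix (Fin n) (Fin n) ℝ) + (4 * γ⁻¹) • A).PosSemidef) :
    ((1/4 : ℝ) • ((1 + hB.sqrt)^2)).PosDef ∧
    ∀ hM : ((1/4 : ℝ) • ((1 + hB.sqrt)^2)).PosSemidef,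
      (1/4 : ℝ) • ((1 + hB.sqrt)^2) - hM.sqrt = γ⁻¹ • A := by
  set U := (1 / 2 : ℝ) • (1 + hB.sqrt)
  have hU : U.PosDef := (Matrix.PosDef.one.add_posSemidef hB.posSemidef_sqrt).smul (by norm_num)
  have hM_eq : (1 / 4 : ℝ) • (1 + hB.sqrt) ^ 2 = U ^ 2 := by
    rw [smul_pow]
    norm_num
  rw [hM_eq]
  refine ⟨hU.sq, fun hU2 => ?_⟩
  rw [hU.posSemidef.sqrt_sq_eq_self hU2, smul_half_one_add_sq_sub, hB.sqrt_sq,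
    add_sub_cancel_left, smul_smul]
  congr 1
  ring

theorem matrix_kkt_sqrt_identity {n : ℕ} (A : Matrix (Fin n) (Fin n) ℝ) (γ : ℝ)
    (hγ : 0 < γ) (hA : A.PosSemidef)
    (hB : ((1 : Matrix (Fin n) (Fin n) ℝ) + (4 * γ⁻¹) • A).PosSemidef) :
    ((1/4 : ℝ) • ((1 + hB.sqrt)^2)).PosDef ∧
    ∀ hM : ((1/4 : ℝ) • ((1 + hB.sqrt)^2)).PosSemidef,
      (1/4 : ℝ) • ((1 + hB.sqrt)^2) - hM.sqrt = γ⁻¹ • A :=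
  matrix_kkt_sqrt_identity_general A γ hB
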